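/- Let J be the derivative (Jacobian matrix) of the vector field F₂ at the point SM₄ = (4/3, 2/3, 40/27, 2/9). Then: J·R_{A1} = (2/3)·R_{A1} where R_{A1} = (−9, 3/2, −10/3, −1); J·R_{B1} = (−1)·R_{B1} where R_{B1} = (4, 1, 80/9, 1); J·R_{A2} = (4/3)·R_{A2} where R_{A2} = (0, 0, −10, 1); and J·R_{B2} = (−1/3)·R_{B2} where R_{B2} = (0, 0, 20/3, 1). Hence the eigenvalues of J are exactly 2/3, −1, 4/3 and −1/3, so SM₄ is a hyperbolic saddle rest point of the order n = 2 STV ODE with a two-dimensional unstable manifold and a two-dimensional stable manifold (reducing to one dimension after the time-translation gauge is fixed). -/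
import Mathlib


open Polynomial

/-- The vector field of the order `n = 2` STV ODE, `u = (z₂, w₀, z₄, w₂)`. -/
noncomputable def F2 (u : Fin 4 → ℝ) : Fin 4 → ℝ :=
  ![2 * u 0 - 3 * u 0 * u 1,
    -(1 / 6) * u 0 + u 1 - (u 1) ^ 2,
    (5 / 12) * (u 0) ^ 2 * u 1 + 4 * u 2 - 5 * u 1 * u 2 - 5 * u 0 * u 3,
    -(1 / 24) * (u 0) ^ 2 + (1 / 4) * u 0 * (u 1) ^ 2 - (1 / 10) * u 2
      + 3 * u 3 - 4 * u 1 * u 3]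

/-- The Jacobian matrix of `F2` at the rest point `SM₄ = (4/3, 2/3, 40/27, 2/9)`. -/
noncomputable def JSM4 : Matrix (Fin 4) (Fin 4) ℝ :=
  !![0, -4, 0, 0;
     -1/6, -1/3, 0, 0;
     -10/27, -20/3, 2/3, -20/3;
     0, -4/9, -1/10, 1/3]

/-- Cofactor expansion of a `4 × 4` determinant. -/
lemma my_det_fin_four {R : Type*} [CommRing R] (A : Matrix (Fin 4) (Fin 4) R) :
    A.det =
      A 0 0 * (A 1 1 * (A 2 2 * A 3 3 - A 2 3 * A 3 2) - A 1 2 * (A 2 1 * A 3 3 - A 2 3 * A 3 1)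
          + A 1 3 * (A 2 1 * A 3 2 - A 2 2 * A 3 1))
      - A 0 1 * (A 1 0 * (A 2 2 * A 3 3 - A 2 3 * A 3 2) - A 1 2 * (A 2 0 * A 3 3 - A 2 3 * A 3 0)
          + A 1 3 * (A 2 0 * A 3 2 - A 2 2 * A 3 0))
      + A 0 2 * (A 1 0 * (A 2 1 * A 3 3 - A 2 3 * A 3 1) - A 1 1 * (A 2 0 * A 3 3 - A 2 3 * A 3 0)
          + A 1 3 * (A 2 0 * A 3 1 - A 2 1 * A 3 0))
      - A 0 3 * (A 1 0 * (A 2 1 * A 3 2 - A 2 2 * A 3 1) - A 1 1 * (A 2 0 * A 3 2 - A 2 2 * A 3 0)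
          + A 1 2 * (A 2 0 * A 3 1 - A 2 1 * A 3 0)) := by
  rw [Matrix.det_succ_row_zero, Fin.sum_univ_four]
  simp [Matrix.det_fin_three, Matrix.submatrix_apply, Fin.succAbove, Fin.lt_def,
    show Fin.succ 2 = (3 : Fin 4) from rfl, show ((3 : Fin 4) : ℕ) = 3 from rfl,
    show Fin.castSucc 2 = (2 : Fin 4) from rfl]
  ring

lemma hasFDerivAt_F2_SM4 : HasFDerivAt F2 (LinearMap.toContinuousLinearMap JSM4.mulVecLin)
    ![4 / 3, 2 / 3, 40 / 27, 2 / 9] := by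
  apply hasFDerivAt_pi''
  set a : Fin 4 → ℝ := ![4 / 3, 2 / 3, 40 / 27, 2 / 9] with ha
  have hp : ∀ i : Fin 4, HasFDerivAt (fun u : Fin 4 → ℝ => u i)
      (ContinuousLinearMap.proj i : (Fin 4 → ℝ) →L[ℝ] ℝ) a := fun i => hasFDerivAt_apply i a
  intro i
  fin_cases i
  · have h := ((hp 0).const_mul 2).sub (((hp 0).mul (hp 1)).const_mul 3)
    convert h using 1
    · funext u; simp [F2]; ring
    · ext v
      simp [JSM4, Matrix.mulVecLin, Matrix.mulVec, dotProduct, Fin.sum_univ_four, ha]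
      ring
  · have h := (((hp 0).const_mul (-(1/6))).add (hp 1)).sub ((hp 1).mul (hp 1))
    convert h using 1
    · funext u; simp [F2]; ring
    · ext v
      simp [JSM4, Matrix.mulVecLin, Matrix.mulVec, dotProduct, Fin.sum_univ_four, ha]
      ring
  · have h1 := (((hp 0).mul (hp 0)).mul (hp 1)).const_mul (5/12)
    have h2 := h1.add ((hp 2).const_mul 4)
    have h3 := h2.sub (((hp 1).mul (hp 2)).const_mul 5)
    have h := h3.sub (((hp 0).mul (hp 3)).const_mul 5)
    convert h using 1
    · funext u; simp [F2]; ring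
    · ext v
      simp [JSM4, Matrix.mulVecLin, Matrix.mulVec, dotProduct, Fin.sum_univ_four, ha]
      ring
  · have h1 := ((hp 0).mul (hp 0)).const_mul (-(1/24))
    have h2 := h1.add (((hp 0).mul ((hp 1).mul (hp 1))).const_mul (1/4))
    have h3 := h2.sub ((hp 2).const_mul (1/10))
    have h4 := h3.add ((hp 3).const_mul 3)
    have h := h4.sub (((hp 1).mul (hp 3)).const_mul 4)
    convert h using 1
    · funext u; simp [F2]; ring
    · ext v
      simp [JSM4, Matrix.mulVecLin, Matrix.mulVec, dotProduct, Fin.sum_univ_four, ha]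
      ring

theorem jacobian_F2_at_SM4_eigen :
    HasFDerivAt F2 (LinearMap.toContinuousLinearMap JSM4.mulVecLin)
      ![4 / 3, 2 / 3, 40 / 27, 2 / 9] ∧
    JSM4.mulVec ![-9, 3 / 2, -10 / 3, -1] = (2 / 3 : ℝ) • ![-9, 3 / 2, -10 / 3, -1] ∧
    JSM4.mulVec ![4, 1, 80 / 9, 1] = (-1 : ℝ) • ![4, 1, 80 / 9, 1] ∧
    JSM4.mulVec ![0, 0, -10, 1] = (4 / 3 : ℝ) • ![0, 0, -10, 1] ∧
    JSM4.mulVec ![0, 0, 20 / 3, 1] = (-1 / 3 : ℝ) • ![0, 0, 20 / 3, 1] ∧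
    JSM4.charpoly =
      (X - C (2 / 3)) * (X - C (-1)) * (X - C (4 / 3)) * (X - C (-1 / 3)) := by
  refine ⟨hasFDerivAt_F2_SM4, ?_, ?_, ?_, ?_, ?_⟩
  · funext i; fin_cases i <;>
      simp [JSM4, Matrix.mulVec, dotProduct, Fin.sum_univ_four] <;> norm_num
  · funext i; fin_cases i <;>
      simp [JSM4, Matrix.mulVec, dotProduct, Fin.sum_univ_four] <;> norm_num
  · funext i; fin_cases i <;>
      simp [JSM4, Matrix.mulVec, dotProduct, Fin.sum_univ_four] <;> norm_num
  · funext i; fin_cases i <;>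
      simp [JSM4, Matrix.mulVec, dotProduct, Fin.sum_univ_four] <;> norm_num
  · apply Polynomial.funext; intro x
    rw [Matrix.charpoly, my_det_fin_four]
    simp [JSM4, Matrix.charmatrix_apply, Matrix.one_apply]
    ring
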